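/- Single-receiver MAC upper bound on successive-decoding rates (Eq. 26): Let h, p₁, …, p_M ∈ ℂ^N, let σ² > 0 and P > 0, and suppose Σ_{m=1}^M ‖p_m‖² ≤ P. For m ∈ {1,…,M} define γ_m := |hᴴ p_m|² / (Σ_{j=m+1}^{M} |hᴴ p_j|² + σ²). Then min_{m∈{1,…,M}} log₂(1 + γ_m) ≤ (1/M) · log₂(1 + P‖h‖²/σ²). -/

import Mathlib

/-!
With `T_m = Σ_{j ≥ m} |hᴴ p_j|² + σ²` we have `1 + γ_m = T_m / T_{m+1}`, so the successive-decoding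
rates telescope to the sum rate `log₂ (T_1 / σ²)`. The minimum rate is at most the average, and
Cauchy–Schwarz with the power budget gives `T_1 ≤ P ‖h‖² + σ²`.
-/

open scoped BigOperators

/-- `hᴴ p`: the effective scalar channel seen through beamformer `p`. -/
noncomputable def hinner {N : ℕ} (h p : Fin N → ℂ) : ℂ := ∑ i, star (h i) * p i

open Finset

lemma hinner_eq_inner {N : ℕ} (h q : Fin N → ℂ) :
    hinner h q = inner ℂ (WithLp.toLp 2 h : EuclideanSpace ℂ (Fin N)) (WithLp.toLp 2 q) := by
  simp [hinner, PiLp.inner_apply, mul_comm]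

lemma sq_norm_hinner_le {N : ℕ} (h q : Fin N → ℂ) :
    ‖hinner h q‖ ^ 2 ≤ (∑ i, ‖h i‖ ^ 2) * ∑ i, ‖q i‖ ^ 2 := by
  have hcs := norm_inner_le_norm (𝕜 := ℂ) (WithLp.toLp 2 h : EuclideanSpace ℂ (Fin N))
    (WithLp.toLp 2 q)
  rw [← hinner_eq_inner] at hcs
  calc ‖hinner h q‖ ^ 2
      ≤ (‖(WithLp.toLp 2 h : EuclideanSpace ℂ (Fin N))‖ * ‖WithLp.toLp 2 q‖) ^ 2 := by gcongr
    _ = (∑ i, ‖h i‖ ^ 2) * ∑ i, ‖q i‖ ^ 2 := by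
      rw [mul_pow, EuclideanSpace.norm_sq_eq, EuclideanSpace.norm_sq_eq]

lemma sum_sq_norm_hinner_le {N M : ℕ} (h : Fin N → ℂ) (p : Fin M → Fin N → ℂ) {P : ℝ}
    (hpow : ∑ m, ∑ i, ‖p m i‖ ^ 2 ≤ P) :
    ∑ m, ‖hinner h (p m)‖ ^ 2 ≤ P * ∑ i, ‖h i‖ ^ 2 :=
  calc ∑ m, ‖hinner h (p m)‖ ^ 2 ≤ ∑ m, (∑ i, ‖h i‖ ^ 2) * ∑ i, ‖p m i‖ ^ 2 :=
        sum_le_sum fun m _ => sq_norm_hinner_le h (p m)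
    _ = (∑ m, ∑ i, ‖p m i‖ ^ 2) * ∑ i, ‖h i‖ ^ 2 := by rw [← mul_sum, mul_comm]
    _ ≤ P * ∑ i, ‖h i‖ ^ 2 := by gcongr

lemma ciInf_le_sum_div_card {ι : Type*} [Fintype ι] (f : ι → ℝ) :
    ⨅ i, f i ≤ (∑ i, f i) / Fintype.card ι := by
  cases isEmpty_or_nonempty ι
  · simp
  · rw [le_div_iff₀ (mod_cast Fintype.card_pos), mul_comm, ← nsmul_eq_mul]
    exact card_nsmul_le_sum _ _ _ fun i _ => ciInf_le (Set.finite_range f).bddBelow i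

section TailSum

variable {M : ℕ} (a : Fin M → ℝ)

-- Indexed by `ℕ` so that the empty tail `k = M` is available.
def tailSum (k : ℕ) : ℝ := ∑ j ∈ univ.filter (fun j : Fin M => k ≤ (j : ℕ)), a j

lemma tailSum_zero : tailSum a 0 = ∑ j, a j := by simp [tailSum]

lemma tailSum_self : tailSum a M = 0 := by
  simp [tailSum, (Fin.is_lt _).not_ge]

lemma sum_filter_lt_eq_tailSum (m : Fin M) :
    ∑ j ∈ univ.filter (fun j => m < j), a j = tailSum a (m + 1) := by
  simp only [tailSum, Fin.lt_def, Nat.succ_le_iff]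

lemma tailSum_val_eq_add (m : Fin M) : tailSum a m = a m + tailSum a (m + 1) := by
  have hsplit : univ.filter (fun j : Fin M => (m : ℕ) ≤ j)
      = insert m (univ.filter (fun j : Fin M => (m : ℕ) + 1 ≤ j)) := by
    ext j
    simp only [mem_filter, mem_univ, true_and, mem_insert, Fin.ext_iff]
    omega
  rw [tailSum, hsplit, sum_insert (by simp), tailSum]

lemma tailSum_nonneg (ha : ∀ m, 0 ≤ a m) (k : ℕ) : 0 ≤ tailSum a k :=
  sum_nonneg fun j _ => ha j

lemma sum_logb_one_add_div_tailSum (b : ℝ) (ha : ∀ m, 0 ≤ a m) {σ2 : ℝ} (hσ : 0 < σ2) :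
    ∑ m, Real.logb b (1 + a m / (∑ j ∈ univ.filter (fun j => m < j), a j + σ2))
      = Real.logb b (1 + (∑ m, a m) / σ2) := by
  set F : ℕ → ℝ := fun k => Real.logb b (tailSum a k + σ2)
  have hpos : ∀ k, tailSum a k + σ2 ≠ 0 := fun k =>
    (add_pos_of_nonneg_of_pos (tailSum_nonneg a ha k) hσ).ne'
  have hterm : ∀ m : Fin M,
      Real.logb b (1 + a m / (∑ j ∈ univ.filter (fun j => m < j), a j + σ2)) = F m - F (m + 1) := by
    intro m
    rw [sum_filter_lt_eq_tailSum, ← Real.logb_div (hpos _) (hpos _), tailSum_val_eq_add a m,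
      add_assoc, add_div, div_self (hpos _), add_comm]
  rw [sum_congr rfl fun m _ => hterm m, Fin.sum_univ_eq_sum_range (fun k => F k - F (k + 1)),
    sum_range_sub', ← Real.logb_div (hpos _) (hpos _), tailSum_zero, tailSum_self, zero_add,
    add_div, div_self hσ.ne', add_comm]

end TailSum

theorem stmt10_general (N M : ℕ) (h : Fin N → ℂ) (p : Fin M → Fin N → ℂ)
    (σ2 P : ℝ) (hσ : 0 < σ2)
    (hpow : ∑ m, ∑ i, ‖p m i‖ ^ 2 ≤ P) :
    (⨅ m : Fin M, Real.logb 2 (1 + ‖hinner h (p m)‖ ^ 2 /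
        ((∑ j ∈ Finset.univ.filter (fun j => m < j), ‖hinner h (p j)‖ ^ 2) + σ2)))
      ≤ (1 / (M : ℝ)) * Real.logb 2 (1 + P * (∑ i, ‖h i‖ ^ 2) / σ2) := by
  calc _ ≤ (∑ m : Fin M, Real.logb 2 (1 + ‖hinner h (p m)‖ ^ 2 /
        ((∑ j ∈ univ.filter (fun j => m < j), ‖hinner h (p j)‖ ^ 2) + σ2))) / M := by
        exact (ciInf_le_sum_div_card _).trans_eq (by rw [Fintype.card_fin])
    _ = Real.logb 2 (1 + (∑ m, ‖hinner h (p m)‖ ^ 2) / σ2) / M := by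
        rw [sum_logb_one_add_div_tailSum _ 2 (fun m => sq_nonneg _) hσ]
    _ ≤ Real.logb 2 (1 + P * (∑ i, ‖h i‖ ^ 2) / σ2) / M := by
        gcongr
        · norm_num
        · exact sum_sq_norm_hinner_le h p hpow
    _ = _ := by ring

/-- **Single-receiver MAC upper bound on successive-decoding rates (Eq. 26).**
For a single receiver with channel `h` decoding `M` superposed streams with beamformers
`p₁, …, p_M` (total power at most `P`) in order, where
`γ_m = |hᴴ p_m|² / (Σ_{j>m} |hᴴ p_j|² + σ²)`, the minimum stream rate is at most
`(1/M)·log₂(1 + P‖h‖²/σ²)`. -/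
theorem stmt10 (N M : ℕ) (hM : 1 ≤ M) (h : Fin N → ℂ) (p : Fin M → Fin N → ℂ)
    (σ2 P : ℝ) (hσ : 0 < σ2) (hP : 0 < P)
    (hpow : ∑ m, ∑ i, ‖p m i‖ ^ 2 ≤ P) :
    (⨅ m : Fin M, Real.logb 2 (1 + ‖hinner h (p m)‖ ^ 2 /
        ((∑ j ∈ Finset.univ.filter (fun j => m < j), ‖hinner h (p j)‖ ^ 2) + σ2)))
      ≤ (1 / (M : ℝ)) * Real.logb 2 (1 + P * (∑ i, ‖h i‖ ^ 2) / σ2) :=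
  stmt10_general N M h p σ2 P hσ hpow
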